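/- arXiv:0712.2794 — 4 statements merged into one kernel-verified Lean document; each statement's English description precedes it below -/
import Mathlib

section
/- Fix λ > 0 and let f(ε) = 8π²λ ∫_ε^2 s^{-4}(1 - s²/4)²(1 + s²/4) ds. Then f(ε) = (8π²λ/3)ε^{-3} - 2π²λ ε^{-1} + O(ε) as ε → 0⁺; in particular the constant term vanishes: lim_{ε→0⁺} (f(ε) - (8π²λ/3)ε^{-3} + 2π²λ ε^{-1}) = 0. -/
open Real Filter MeasureTheory intervalIntegral Asymptotics Topology

/-! The integrand is a Laurent polynomial,
`s⁻⁴ (1 - s²/4)² (1 + s²/4) = s⁻⁴ - s⁻²/4 + 1/16 - s²/64`,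
so `f(ε)` is computed exactly by the fundamental theorem of calculus:
`f(ε) = (8π²λ/3) ε⁻³ - 2π²λ ε⁻¹ + (π²λ/2) ε - (π²λ/24) ε³`.
The two singular terms cancel against the counterterms and there is no constant term. -/

theorem hasDerivAt_volume_density_antideriv {s : ℝ} (hs : s ≠ 0) :
    HasDerivAt (fun x : ℝ => -(x ^ 3)⁻¹ / 3 + x⁻¹ / 4 - x / 16 + x ^ 3 / 192)
      ((s ^ 4)⁻¹ * (1 - s ^ 2 / 4) ^ 2 * (1 + s ^ 2 / 4)) s := by
  have hcube : HasDerivAt (fun x : ℝ => x ^ 3) (3 * s ^ 2) s := by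
    simpa using hasDerivAt_pow 3 s
  have hinv : HasDerivAt (fun x : ℝ => x⁻¹) (-(s ^ 2)⁻¹) s := hasDerivAt_inv hs
  refine ((((hcube.inv (pow_ne_zero 3 hs)).neg.div_const 3).add (hinv.div_const 4)).sub
    ((hasDerivAt_id s).div_const 16) |>.add (hcube.div_const 192)).congr_deriv ?_
  field_simp
  ring

theorem integral_volume_density {ε : ℝ} (hε : 0 < ε) :
    (∫ s in ε..2, (s ^ 4)⁻¹ * (1 - s ^ 2 / 4) ^ 2 * (1 + s ^ 2 / 4))
      = (ε ^ 3)⁻¹ / 3 - ε⁻¹ / 4 + ε / 16 - ε ^ 3 / 192 := by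
  have hpos : ∀ s ∈ Set.uIcc ε 2, s ≠ 0 := fun s hs =>
    (lt_of_lt_of_le (lt_min hε two_pos) hs.1).ne'
  have hint : IntervalIntegrable
      (fun s : ℝ => (s ^ 4)⁻¹ * (1 - s ^ 2 / 4) ^ 2 * (1 + s ^ 2 / 4)) volume ε 2 :=
    ContinuousOn.intervalIntegrable <|
      (((continuousOn_pow 4).inv₀ fun s hs => pow_ne_zero 4 (hpos s hs)).mul
        (by fun_prop)).mul (by fun_prop)
  rw [integral_eq_sub_of_hasDerivAt
    (fun s hs => hasDerivAt_volume_density_antideriv (hpos s hs)) hint]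
  field_simp
  ring

theorem renormalized_volume_error_eq (lam : ℝ) {ε : ℝ} (hε : 0 < ε) :
    (8 * π ^ 2 * lam * ∫ s in ε..2, (s ^ 4)⁻¹ * (1 - s ^ 2 / 4) ^ 2 * (1 + s ^ 2 / 4))
        - (8 * π ^ 2 * lam / 3) * (ε ^ 3)⁻¹ + 2 * π ^ 2 * lam * ε⁻¹
      = π ^ 2 * lam / 2 * ε - π ^ 2 * lam / 24 * ε ^ 3 := by
  rw [integral_volume_density hε]
  ring

theorem isBigO_linear_sub_cubic (a b : ℝ) :
    (fun ε : ℝ => a * ε - b * ε ^ 3) =O[𝓝 0] fun ε => ε :=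
  ((isBigO_refl _ _).const_mul_left a).sub
    ((isLittleO_pow_id (by norm_num : 1 < 3)).isBigO.const_mul_left b)

theorem renormalized_volume_S1_times_R3_general (lam : ℝ) :
    ((fun ε : ℝ =>
        (8 * π ^ 2 * lam * ∫ s in ε..2, (s ^ 4)⁻¹ * (1 - s ^ 2 / 4) ^ 2 * (1 + s ^ 2 / 4))
        - (8 * π ^ 2 * lam / 3) * (ε ^ 3)⁻¹ + 2 * π ^ 2 * lam * ε⁻¹)
      =O[nhdsWithin 0 (Set.Ioi 0)] (fun ε : ℝ => ε)) ∧
    Tendsto (fun ε : ℝ =>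
        (8 * π ^ 2 * lam * ∫ s in ε..2, (s ^ 4)⁻¹ * (1 - s ^ 2 / 4) ^ 2 * (1 + s ^ 2 / 4))
        - (8 * π ^ 2 * lam / 3) * (ε ^ 3)⁻¹ + 2 * π ^ 2 * lam * ε⁻¹)
      (nhdsWithin 0 (Set.Ioi 0)) (nhds 0) := by
  have hbigO := ((isBigO_linear_sub_cubic (π ^ 2 * lam / 2) (π ^ 2 * lam / 24)).mono
    nhdsWithin_le_nhds).congr' (eventually_nhdsWithin_of_forall fun ε hε =>
      (renormalized_volume_error_eq lam hε).symm) EventuallyEq.rfl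
  exact ⟨hbigO, hbigO.trans_tendsto (tendsto_nhdsWithin_of_tendsto_nhds tendsto_id)⟩

/-- Renormalized volume of the hyperbolic manifold `S¹(λ) × ℝ³`: for fixed `λ > 0`,
`f(ε) = 8π²λ ∫_ε^2 s⁻⁴ (1 - s²/4)² (1 + s²/4) ds = (8π²λ/3)ε⁻³ - 2π²λ ε⁻¹ + O(ε)`;
in particular the constant term (the renormalized volume) vanishes. -/
theorem renormalized_volume_S1_times_R3 (lam : ℝ) (hlam : 0 < lam) :
    ((fun ε : ℝ =>
        (8 * π ^ 2 * lam * ∫ s in ε..2, (s ^ 4)⁻¹ * (1 - s ^ 2 / 4) ^ 2 * (1 + s ^ 2 / 4))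
        - (8 * π ^ 2 * lam / 3) * (ε ^ 3)⁻¹ + 2 * π ^ 2 * lam * ε⁻¹)
      =O[nhdsWithin 0 (Set.Ioi 0)] (fun ε : ℝ => ε)) ∧
    Tendsto (fun ε : ℝ =>
        (8 * π ^ 2 * lam * ∫ s in ε..2, (s ^ 4)⁻¹ * (1 - s ^ 2 / 4) ^ 2 * (1 + s ^ 2 / 4))
        - (8 * π ^ 2 * lam / 3) * (ε ^ 3)⁻¹ + 2 * π ^ 2 * lam * ε⁻¹)
      (nhdsWithin 0 (Set.Ioi 0)) (nhds 0) :=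
  renormalized_volume_S1_times_R3_general lam
end

section
/- Suppose ρ : [0, ε) → R is smooth with ρ(0) = 1 and satisfies ρ(s) − s ρ'(s) = √(ρ(s)² + s² − 2m s³/ρ(s)) for s > 0. Then ρ''(0) = −1/2 and ρ'''(0) = 2m; i.e., the Taylor expansion of ρ at 0 is ρ(s) = 1 − s²/4 + (m/3)s³ + O(s⁴). -/
open Set Filter Topology

private lemma aux_left_lim {ε₁ : ℝ} (hε₁ : 0 < ε₁) {S : Set ℝ}
    (hsub : Set.Ioo 0 ε₁ ⊆ S) {A : ℝ → ℝ}
    (hc : ContinuousWithinAt A S 0) (hz : ∀ s ∈ Set.Ioo 0 ε₁, A s = 0) : A 0 = 0 := by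
  have h0c : (0:ℝ) ∈ closure (Set.Ioo 0 ε₁) := by
    rw [closure_Ioo hε₁.ne]; exact ⟨le_refl 0, hε₁.le⟩
  have hne : (𝓝[Set.Ioo (0:ℝ) ε₁] 0).NeBot := mem_closure_iff_nhdsWithin_neBot.mp h0c
  have t1 : Tendsto A (𝓝[Set.Ioo (0:ℝ) ε₁] 0) (𝓝 (A 0)) :=
    hc.mono_left (nhdsWithin_mono _ hsub)
  have t2 : Tendsto A (𝓝[Set.Ioo (0:ℝ) ε₁] 0) (𝓝 0) := by
    apply tendsto_const_nhds.congr'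
    exact (eventually_nhdsWithin_of_forall hz).mono fun s h => h.symm
  exact tendsto_nhds_unique t1 t2

private lemma aux_deriv_zero {U : Set ℝ} (hU : IsOpen U) {s : ℝ} (hs : s ∈ U) {A : ℝ → ℝ} {d : ℝ}
    (hd : HasDerivAt A d s) (hz : ∀ t ∈ U, A t = 0) : d = 0 := by
  have h : A =ᶠ[𝓝 s] fun _ => 0 := by
    filter_upwards [hU.mem_nhds hs] with t ht using hz t ht
  have : HasDerivAt A 0 s := (hasDerivAt_const s (0:ℝ)).congr_of_eventuallyEq h
  exact hd.unique this

/-- The special defining function expansion for AdS-Schwarzschild: if `ρ` is smooth on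
`[0, ε)` with `ρ(0) = 1` and satisfies `ρ - sρ' = √(ρ² + s² - 2ms³/ρ)` for `0 < s < ε`,
then `ρ''(0) = -1/2` and `ρ'''(0) = 2m`, i.e. `ρ(s) = 1 - s²/4 + (m/3)s³ + O(s⁴)`. -/
theorem adsSchwarzschild_defining_function_expansion (m ε : ℝ) (hε : 0 < ε)
    (ρ : ℝ → ℝ) (hρ : ContDiffOn ℝ (⊤ : ℕ∞) ρ (Set.Ico 0 ε)) (h0 : ρ 0 = 1)
    (hode : ∀ s ∈ Set.Ioo 0 ε,
      ρ s - s * derivWithin ρ (Set.Ico 0 ε) s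
        = Real.sqrt (ρ s ^ 2 + s ^ 2 - 2 * m * s ^ 3 / ρ s)) :
    iteratedDerivWithin 2 ρ (Set.Ico 0 ε) 0 = -(1 / 2) ∧
    iteratedDerivWithin 3 ρ (Set.Ico 0 ε) 0 = 2 * m := by
  set S : Set ℝ := Set.Ico 0 ε with hSdef
  have hUD : UniqueDiffOn ℝ S := uniqueDiffOn_Ico 0 ε
  have h0S : (0:ℝ) ∈ S := ⟨le_refl 0, hε⟩
  set f1 : ℝ → ℝ := derivWithin ρ S with hf1
  set f2 : ℝ → ℝ := derivWithin f1 S with hf2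
  set f3 : ℝ → ℝ := derivWithin f2 S with hf3
  have hρ1 : ContDiffOn ℝ (⊤ : ℕ∞) f1 S := hρ.derivWithin hUD (by simp)
  have hρ2 : ContDiffOn ℝ (⊤ : ℕ∞) f2 S := hρ1.derivWithin hUD (by simp)
  have hcρ : ContinuousWithinAt ρ S 0 := (hρ.continuousOn) 0 h0S
  have hc1 : ContinuousWithinAt f1 S 0 := (hρ1.continuousOn) 0 h0S
  have hc2 : ContinuousWithinAt f2 S 0 := (hρ2.continuousOn) 0 h0S
  have hρ3 : ContDiffOn ℝ (⊤ : ℕ∞) f3 S := hρ2.derivWithin hUD (by simp)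
  have hc3 : ContinuousWithinAt f3 S 0 := (hρ3.continuousOn) 0 h0S
  have hρ0ne : ρ 0 ≠ 0 := by rw [h0]; norm_num
  -- choose ε₁ on which ρ > 1/2 and Q > 0
  set Q : ℝ → ℝ := fun s => ρ s ^ 2 + s ^ 2 - 2 * m * s ^ 3 / ρ s with hQdef
  have hcQ : ContinuousWithinAt Q S 0 := by
    apply ContinuousWithinAt.sub
    · exact (hcρ.pow 2).add ((continuousWithinAt_id).pow 2)
    · exact ContinuousWithinAt.div
        ((continuousWithinAt_const.mul continuousWithinAt_const).mul
          ((continuousWithinAt_id).pow 3)) hcρ hρ0ne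
  have hev : ∀ᶠ s in 𝓝[S] 0, 1/2 < ρ s ∧ 0 < Q s := by
    have e1 : ∀ᶠ s in 𝓝[S] 0, 1/2 < ρ s :=
      hcρ.eventually (eventually_gt_nhds (by rw [h0]; norm_num))
    have e2 : ∀ᶠ s in 𝓝[S] 0, 0 < Q s := by
      apply hcQ.eventually (eventually_gt_nhds ?_)
      simp [hQdef, h0]
    exact e1.and e2
  obtain ⟨δ, hδ, hδsub⟩ := Metric.mem_nhdsWithin_iff.mp hev
  set ε₁ : ℝ := min δ ε with hε₁def
  have hε₁ : 0 < ε₁ := lt_min hδ hε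
  have hε₁ε : ε₁ ≤ ε := min_le_right δ ε
  have hkey : ∀ s ∈ Set.Ico 0 ε₁, 1/2 < ρ s ∧ 0 < Q s := by
    intro s hs
    apply hδsub
    constructor
    · rw [Metric.mem_ball, Real.dist_eq, sub_zero, abs_of_nonneg hs.1]
      exact lt_of_lt_of_le hs.2 (min_le_left δ ε)
    · exact ⟨hs.1, lt_of_lt_of_le hs.2 hε₁ε⟩
  set U : Set ℝ := Set.Ioo 0 ε₁ with hUdef
  have hUS : U ⊆ S := fun s hs => ⟨hs.1.le, lt_of_lt_of_le hs.2 hε₁ε⟩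
  have hUopen : IsOpen U := isOpen_Ioo
  have hρne : ∀ s ∈ Set.Ico 0 ε₁, ρ s ≠ 0 := fun s hs => by
    have := (hkey s hs).1; linarith
  -- pointwise derivatives on U
  have hderiv : ∀ s ∈ U, HasDerivAt ρ (f1 s) s ∧ HasDerivAt f1 (f2 s) s ∧ HasDerivAt f2 (f3 s) s := by
    intro s hs
    have hsS : s ∈ S := hUS hs
    have hSn : S ∈ 𝓝 s := by
      rw [mem_nhds_iff]
      exact ⟨Set.Ioo 0 ε, Set.Ioo_subset_Ico_self, isOpen_Ioo,
        ⟨hs.1, lt_of_lt_of_le hs.2 hε₁ε⟩⟩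
    refine ⟨?_, ?_, ?_⟩
    · have h := ((hρ.differentiableOn (by simp)) s hsS).differentiableAt hSn
      rw [hf1, derivWithin_of_mem_nhds hSn]; exact h.hasDerivAt
    · have h := ((hρ1.differentiableOn (by simp)) s hsS).differentiableAt hSn
      rw [hf2, derivWithin_of_mem_nhds hSn]; exact h.hasDerivAt
    · have h := ((hρ2.differentiableOn (by simp)) s hsS).differentiableAt hSn
      rw [hf3, derivWithin_of_mem_nhds hSn]; exact h.hasDerivAt
  -- the A identity
  set A : ℝ → ℝ := fun s => -2 * ρ s * f1 s + s * (f1 s)^2 - s + 2*m*s^2/ρ s with hAdef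
  have hA : ∀ s ∈ U, A s = 0 := by
    intro s hs
    have hsI : s ∈ Set.Ico 0 ε₁ := ⟨hs.1.le, hs.2⟩
    have hρs := hρne s hsI
    have hQs := (hkey s hsI).2
    have hodes := hode s ⟨hs.1, lt_of_lt_of_le hs.2 hε₁ε⟩
    have hsq : (ρ s - s * f1 s)^2 = Q s := by
      rw [hodes, Real.sq_sqrt hQs.le]
    have hkey2 : s * A s = (ρ s - s * f1 s)^2 - Q s := by
      simp only [hAdef, hQdef]
      field_simp
      ring
    have hs0 : s ≠ 0 := ne_of_gt hs.1
    have : s * A s = 0 := by rw [hkey2, hsq, sub_self]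
    exact (mul_eq_zero.mp this).resolve_left hs0
  -- the B identity
  set B : ℝ → ℝ := fun s => -(f1 s)^2 - 2*ρ s*f2 s + 2*s*f1 s*f2 s - 1 + 4*m*s/ρ s
    - 2*m*s^2*f1 s/(ρ s)^2 with hBdef
  have hABderiv : ∀ s ∈ U, HasDerivAt A (B s) s := by
    intro s hs
    obtain ⟨hd1, hd2, hd3⟩ := hderiv s hs
    have hρs := hρne s ⟨hs.1.le, hs.2⟩
    have h := (((hasDerivAt_const s (-2:ℝ)).mul hd1).mul hd2)
    have hA1 : HasDerivAt (fun t => -2 * ρ t * f1 t)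
        (-2 * f1 s * f1 s + -2 * ρ s * f2 s) s := by
      have := ((hd1.const_mul (-2:ℝ)).fun_mul hd2)
      convert this using 1
      all_goals simp only [id]
      all_goals ring
    have hA2 : HasDerivAt (fun t => t * (f1 t)^2) ((f1 s)^2 + s * (2 * f1 s * f2 s)) s := by
      have := (hasDerivAt_id s).fun_mul ((hd2.fun_pow 2))
      convert this using 1
      · rfl
      · rfl
      all_goals simp only [id]
      all_goals norm_num
      all_goals ring
    have hA3 : HasDerivAt (fun t => 2*m*t^2/ρ t)
        ((2*m*(2*s) * ρ s - 2*m*s^2 * f1 s)/(ρ s)^2) s := by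
      have := HasDerivAt.fun_div (by simpa using ((hasDerivAt_pow 2 s).const_mul (2*m))) hd1 hρs
      convert this using 1
      all_goals norm_num
    have := ((hA1.fun_add hA2).fun_sub (hasDerivAt_id s)).fun_add hA3
    convert this using 1
    · rfl
    · rfl
    · rfl
    all_goals simp only [hBdef, id]
    all_goals field_simp
    all_goals ring
  have hB : ∀ s ∈ U, B s = 0 := fun s hs =>
    aux_deriv_zero hUopen hs (hABderiv s hs) hA
  -- the C identity
  set C : ℝ → ℝ := fun s => -2*f1 s*f2 s - 2*ρ s*f3 s + 2*s*(f2 s)^2 + 2*s*f1 s*f3 s + 4*m/ρ s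
    - 8*m*s*f1 s/(ρ s)^2 - 2*m*s^2*f2 s/(ρ s)^2 + 4*m*s^2*(f1 s)^2/(ρ s)^3 with hCdef
  have hBCderiv : ∀ s ∈ U, HasDerivAt B (C s) s := by
    intro s hs
    obtain ⟨hd1, hd2, hd3⟩ := hderiv s hs
    have hρs := hρne s ⟨hs.1.le, hs.2⟩
    have hB1 : HasDerivAt (fun t => -(f1 t)^2) (-(2 * f1 s * f2 s)) s := by
      have := (hd2.fun_pow 2).fun_neg
      convert this using 2
      · rfl
      · rfl
      · rfl
      norm_num
    have hB2 : HasDerivAt (fun t => 2*ρ t*f2 t) (2 * f1 s * f2 s + 2 * ρ s * f3 s) s := by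
      have := (hd1.const_mul (2:ℝ)).fun_mul hd3
      convert this using 1
      all_goals ring
    have hB3 : HasDerivAt (fun t => 2*t*f1 t*f2 t)
        ((2*f1 s + 2*s*f2 s)*f2 s + 2*s*f1 s*f3 s) s := by
      have := (((hasDerivAt_id s).const_mul (2:ℝ)).fun_mul hd2).fun_mul hd3
      convert this using 1
      · rfl
      · rfl
      all_goals simp only [id]
      all_goals ring
    have hB4 : HasDerivAt (fun t => 4*m*t/ρ t) ((4*m*ρ s - 4*m*s*f1 s)/(ρ s)^2) s := by
      have := HasDerivAt.fun_div (by simpa using (hasDerivAt_id s).const_mul (4*m) :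
        HasDerivAt (fun t => 4*m*t) (4*m) s) hd1 hρs
      convert this using 1
      all_goals norm_num
    have hB5 : HasDerivAt (fun t => 2*m*t^2*f1 t/(ρ t)^2)
        (((2*m*(2*s)*f1 s + 2*m*s^2*f2 s) * (ρ s)^2 - 2*m*s^2*f1 s * (2*ρ s*f1 s))/((ρ s)^2)^2) s := by
      apply HasDerivAt.fun_div
      · have := (((hasDerivAt_pow 2 s).const_mul (2*m)).fun_mul hd2)
        convert this using 1
        all_goals norm_num
        all_goals ring
      · have := hd1.fun_pow 2
        convert this using 1
        all_goals norm_num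
      · exact pow_ne_zero 2 hρs
    have := ((((hB1.fun_sub hB2).fun_add hB3).fun_sub (hasDerivAt_const s (1:ℝ))).fun_add hB4).fun_sub hB5
    convert this using 1
    · rfl
    · rfl
    all_goals simp only [hCdef, id]
    all_goals field_simp
    all_goals ring
  have hC : ∀ s ∈ U, C s = 0 := fun s hs =>
    aux_deriv_zero hUopen hs (hBCderiv s hs) hB
  -- limits at 0
  have hcA : ContinuousWithinAt A S 0 := by
    apply ContinuousWithinAt.add
    apply ContinuousWithinAt.sub
    apply ContinuousWithinAt.add
    · exact (continuousWithinAt_const.mul hcρ).mul hc1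
    · exact continuousWithinAt_id.mul (hc1.pow 2)
    · exact continuousWithinAt_id
    · exact ContinuousWithinAt.div
        ((continuousWithinAt_const.mul continuousWithinAt_const).mul (continuousWithinAt_id.pow 2))
        hcρ hρ0ne
  have hcB : ContinuousWithinAt B S 0 := by
    refine ContinuousWithinAt.sub (ContinuousWithinAt.add (ContinuousWithinAt.sub
      (ContinuousWithinAt.add (ContinuousWithinAt.sub ?_ ?_) ?_) ?_) ?_) ?_
    · exact (hc1.pow 2).neg
    · exact (continuousWithinAt_const.mul hcρ).mul hc2
    · exact ((continuousWithinAt_const.mul continuousWithinAt_id).mul hc1).mul hc2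
    · exact continuousWithinAt_const
    · exact ContinuousWithinAt.div
        ((continuousWithinAt_const.mul continuousWithinAt_const).mul continuousWithinAt_id)
        hcρ hρ0ne
    · exact ContinuousWithinAt.div
        (((continuousWithinAt_const.mul continuousWithinAt_const).mul
          (continuousWithinAt_id.pow 2)).mul hc1) (hcρ.pow 2) (by simp [h0])
  have hcC : ContinuousWithinAt C S 0 := by
    refine ContinuousWithinAt.add (ContinuousWithinAt.sub (ContinuousWithinAt.sub
      (ContinuousWithinAt.add (ContinuousWithinAt.add (ContinuousWithinAt.add
        (ContinuousWithinAt.sub ?_ ?_) ?_) ?_) ?_) ?_) ?_) ?_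
    · exact (continuousWithinAt_const.mul hc1).mul hc2
    · exact (continuousWithinAt_const.mul hcρ).mul hc3
    · exact (continuousWithinAt_const.mul continuousWithinAt_id).mul (hc2.pow 2)
    · exact ((continuousWithinAt_const.mul continuousWithinAt_id).mul hc1).mul hc3
    · exact ContinuousWithinAt.div continuousWithinAt_const hcρ hρ0ne
    · exact ContinuousWithinAt.div
        (((continuousWithinAt_const.mul continuousWithinAt_const).mul continuousWithinAt_id).mul hc1)
        (hcρ.pow 2) (by simp [h0])
    · exact ContinuousWithinAt.div
        (((continuousWithinAt_const.mul continuousWithinAt_const).mul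
          (continuousWithinAt_id.pow 2)).mul hc2) (hcρ.pow 2) (by simp [h0])
    · exact ContinuousWithinAt.div
        (((continuousWithinAt_const.mul continuousWithinAt_const).mul
          (continuousWithinAt_id.pow 2)).mul (hc1.pow 2)) (hcρ.pow 3) (by simp [h0])
  -- evaluate at 0
  have hA0 : A 0 = 0 := aux_left_lim hε₁ hUS hcA hA
  have hf10 : f1 0 = 0 := by
    simp only [hAdef] at hA0
    rw [h0] at hA0
    norm_num at hA0
    linarith
  have hB0 : B 0 = 0 := aux_left_lim hε₁ hUS hcB hB
  have hf20 : f2 0 = -(1/2) := by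
    simp only [hBdef] at hB0
    rw [h0, hf10] at hB0
    norm_num at hB0
    linarith
  have hC0 : C 0 = 0 := aux_left_lim hε₁ hUS hcC hC
  have hf30 : f3 0 = 2 * m := by
    simp only [hCdef] at hC0
    rw [h0, hf10] at hC0
    norm_num at hC0
    linarith
  -- conclude
  have e1 : ∀ x ∈ S, iteratedDerivWithin 1 ρ S x = f1 x := fun x hx =>
    by rw [iteratedDerivWithin_one]
  have e2 : ∀ x ∈ S, iteratedDerivWithin 2 ρ S x = f2 x := by
    intro x hx
    rw [iteratedDerivWithin_succ]
    exact derivWithin_congr e1 (e1 x hx)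
  have e3 : iteratedDerivWithin 3 ρ S 0 = f3 0 := by
    rw [iteratedDerivWithin_succ]
    exact derivWithin_congr e2 (e2 0 h0S)
  exact ⟨(e2 0 h0S).trans hf20, e3.trans hf30⟩
end

section
/- For α > 2, with E_α = (2/3)(α − 2)/(α² − 1) and V(α) = 4π² E_α(−(1/6)E_α(α³ + 3α^{-1}) + (2/3)(α + α^{-1})), the maximum of V on (2, ∞) is attained at α = 2 + √3, with V(2 + √3) = (4π²/3)·(2(4 − √3)/9), and this value is strictly less than (1/2)·(4π²/3)·χ where χ = χ(CP² \ {p}) = 2 (i.e. V_max < 4π²/3). -/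
open Real

/-- The coefficient `E_α` of the AdS-Kerr metric. -/
noncomputable def Ealpha (α : ℝ) : ℝ := (2 / 3) * (α - 2) / (α ^ 2 - 1)

/-- The renormalized volume of the AdS-Kerr space `(ℂP² \ {p}, g_α)`. -/
noncomputable def VKerr (α : ℝ) : ℝ :=
  4 * Real.pi ^ 2 * Ealpha α *
    (-(1 / 6) * Ealpha α * (α ^ 3 + 3 * α⁻¹) + (2 / 3) * (α + α⁻¹))

lemma VKerr_eq (α : ℝ) (h0 : α ≠ 0) (h1 : α ^ 2 - 1 ≠ 0) :
    VKerr α = 4 * Real.pi ^ 2 * (2 * (α - 2) * (8 * α ^ 3 - α ^ 4 - 3)) /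
      (27 * (α ^ 2 - 1) ^ 2) := by
  unfold VKerr Ealpha
  field_simp
  ring

lemma sqrt3_lt : Real.sqrt 3 < 2 := by
  nlinarith [Real.sq_sqrt (by norm_num : (3:ℝ) ≥ 0), Real.sqrt_nonneg 3]

lemma sqrt3_gt : 1 < Real.sqrt 3 := by
  nlinarith [Real.sq_sqrt (by norm_num : (3:ℝ) ≥ 0), Real.sqrt_nonneg 3]

lemma VKerr_val : VKerr (2 + Real.sqrt 3) =
    (4 * π ^ 2 / 3) * (2 * (4 - Real.sqrt 3) / 9) := by
  set s := Real.sqrt 3 with hsdef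
  have hs : s ^ 2 = 3 := Real.sq_sqrt (by norm_num)
  have hs0 : 0 < s := lt_trans one_pos sqrt3_gt
  have h0 : (2 + s) ≠ 0 := by positivity
  have h1 : (2 + s) ^ 2 - 1 ≠ 0 := by nlinarith
  rw [VKerr_eq _ h0 h1]
  rw [div_eq_iff (by nlinarith : (27 : ℝ) * ((2 + s) ^ 2 - 1) ^ 2 ≠ 0)]
  have c : (2 * ((2 + s) - 2) * (8 * (2 + s) ^ 3 - (2 + s) ^ 4 - 3)) * 3 * 9 =
      (2 * (4 - s)) * (27 * ((2 + s) ^ 2 - 1) ^ 2) := by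
    linear_combination ((216:ℝ) * s ^ 2 + 756 * s + 648) * hs
  linear_combination (4 * π ^ 2 / 27) * c

/-- The maximum of the AdS-Kerr renormalized volume on `(2, ∞)` is attained at
`α = 2 + √3`, with value `(4π²/3)·2(4-√3)/9 < (1/2)(4π²/3)·χ(ℂP² \ {p})`, `χ = 2`. -/
theorem adsKerr_renormalized_volume_max :
    (∀ α : ℝ, 2 < α → VKerr α ≤ VKerr (2 + Real.sqrt 3)) ∧
    VKerr (2 + Real.sqrt 3) = (4 * π ^ 2 / 3) * (2 * (4 - Real.sqrt 3) / 9) ∧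
    VKerr (2 + Real.sqrt 3) < (1 / 2) * (4 * π ^ 2 / 3) * 2 := by
  set s := Real.sqrt 3 with hsdef
  have hs : s ^ 2 = 3 := Real.sq_sqrt (by norm_num)
  have hs1 : 1 < s := sqrt3_gt
  have hs2 : s < 2 := sqrt3_lt
  have hπ : (0:ℝ) < π ^ 2 := by positivity
  refine ⟨?_, VKerr_val, ?_⟩
  · intro α hα
    have h0 : α ≠ 0 := by positivity
    have h1 : α ^ 2 - 1 ≠ 0 := by nlinarith
    rw [VKerr_eq α h0 h1, VKerr_val]
    have hden : (0:ℝ) < 27 * (α ^ 2 - 1) ^ 2 := by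
      have : (0:ℝ) < α ^ 2 - 1 := by nlinarith
      positivity
    rw [div_le_iff₀ hden]
    have h74 : 0 < 7 - 4 * s := by nlinarith
    have hq : 0 < α ^ 3 + (s - 2) * α ^ 2 + (7 - 4 * s) * α + (s - 2) := by
      have hA : 4 < α ^ 2 * (α - (2 - s)) := by nlinarith
      nlinarith [mul_pos h74 (by linarith : (0:ℝ) < α)]
    have hfac : (4 - s) * (α ^ 2 - 1) ^ 2 - (α - 2) * (8 * α ^ 3 - α ^ 4 - 3) =
        (α - (2 + s)) ^ 2 * (α ^ 3 + (s - 2) * α ^ 2 + (7 - 4 * s) * α + (s - 2)) := by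
      linear_combination (α ^ 3 - (s + 10) * α ^ 2 + (4 * s + 11) * α - (s + 2)) * hs
    have hineq : (α - 2) * (8 * α ^ 3 - α ^ 4 - 3) ≤ (4 - s) * (α ^ 2 - 1) ^ 2 := by
      nlinarith [mul_nonneg (sq_nonneg (α - (2 + s))) hq.le]
    nlinarith [mul_le_mul_of_nonneg_left hineq (by positivity : (0:ℝ) ≤ 8 * π ^ 2)]
  · rw [VKerr_val]
    nlinarith
end

section
/- Let A be a trace-free symmetric 3×3 real matrix with Frobenius norm |A|. Then for every vector v ∈ R³, ⟨Av, v⟩ ≤ √(2/3)·|A|·|v|², and this bound is sharp. -/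
/-!
Write `T` for the trace-free part `v vᵀ - (|v|² / n) I` of `v vᵀ`. Since `A` is trace-free,
`⟨Av, v⟩ = ⟨A, v vᵀ⟩_F = ⟨A, T⟩_F`, and `|T|²_F = |v|⁴ - |v|⁴ / n`, so Cauchy–Schwarz for the
Frobenius inner product gives `⟨Av, v⟩ ≤ √(1 - 1/n) |A| |v|²`, with equality for `A = T`.
-/

open Matrix Finset

theorem Real.sum_sum_mul_le_sqrt_mul_sqrt {ι κ : Type*} [Fintype ι] [Fintype κ]
    (f g : ι → κ → ℝ) :
    ∑ i, ∑ j, f i j * g i j ≤ √(∑ i, ∑ j, f i j ^ 2) * √(∑ i, ∑ j, g i j ^ 2) := by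
  simpa only [Fintype.sum_prod_type] using
    Real.sum_mul_le_sqrt_mul_sqrt univ (fun p : ι × κ => f p.1 p.2) (fun p => g p.1 p.2)

namespace Matrix

theorem dotProduct_self_nonneg {n R : Type*} [Fintype n] [Ring R] [LinearOrder R]
    [IsStrictOrderedRing R] (v : n → R) : 0 ≤ v ⬝ᵥ v :=
  sum_nonneg fun i _ => mul_self_nonneg (v i)

theorem isSymm_vecMulVec {n : Type*} (v : n → ℝ) : (vecMulVec v v).IsSymm :=
  transpose_vecMulVec v v

variable {n : Type*} [Fintype n]

theorem sum_sum_mul_vecMulVec (A : Matrix n n ℝ) (v : n → ℝ) :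
    ∑ i, ∑ j, A i j * vecMulVec v v i j = A *ᵥ v ⬝ᵥ v := by
  simp only [vecMulVec_apply, dotProduct, mulVec, sum_mul]
  exact sum_congr rfl fun i _ => sum_congr rfl fun j _ => by ring

theorem sum_sum_vecMulVec_sq (v : n → ℝ) :
    ∑ i, ∑ j, vecMulVec v v i j ^ 2 = (v ⬝ᵥ v) ^ 2 := by
  simp only [vecMulVec_apply, dotProduct, sq, sum_mul_sum]
  exact sum_congr rfl fun i _ => sum_congr rfl fun j _ => by ring

variable [DecidableEq n]

noncomputable def traceFreePart (B : Matrix n n ℝ) : Matrix n n ℝ :=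
  B - (B.trace / Fintype.card n) • 1

theorem trace_traceFreePart (B : Matrix n n ℝ) : B.traceFreePart.trace = 0 := by
  rcases isEmpty_or_nonempty n with _ | _
  · simp [trace]
  · simp [traceFreePart, trace_sub, trace_smul, trace_one]

theorem IsSymm.traceFreePart {B : Matrix n n ℝ} (hB : B.IsSymm) : B.traceFreePart.IsSymm :=
  hB.sub (isSymm_one.smul _)

theorem sum_sum_mul_smul_one (A : Matrix n n ℝ) (c : ℝ) :
    ∑ i, ∑ j, A i j * (c • (1 : Matrix n n ℝ)) i j = c * A.trace := by
  simp [one_apply, trace, mul_sum, mul_comm]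

theorem sum_sum_mul_traceFreePart {A : Matrix n n ℝ} (hA : A.trace = 0) (B : Matrix n n ℝ) :
    ∑ i, ∑ j, A i j * B.traceFreePart i j = ∑ i, ∑ j, A i j * B i j := by
  simp only [traceFreePart, sub_apply, mul_sub, sum_sub_distrib, sum_sum_mul_smul_one, hA,
    mul_zero, sub_zero]

theorem sum_sum_traceFreePart_sq (B : Matrix n n ℝ) :
    ∑ i, ∑ j, B.traceFreePart i j ^ 2
      = ∑ i, ∑ j, B i j ^ 2 - B.trace ^ 2 / Fintype.card n := by
  calc ∑ i, ∑ j, B.traceFreePart i j ^ 2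
      = ∑ i, ∑ j, B.traceFreePart i j * B i j := by
        simp only [sq]; exact sum_sum_mul_traceFreePart (trace_traceFreePart B) B
    _ = ∑ i, ∑ j, B i j * B.traceFreePart i j :=
        sum_congr rfl fun _ _ => sum_congr rfl fun _ _ => mul_comm _ _
    _ = ∑ i, ∑ j, B i j * B i j - B.trace / Fintype.card n * B.trace := by
        rw [traceFreePart]
        simp only [sub_apply, mul_sub, sum_sub_distrib, sum_sum_mul_smul_one]
    _ = ∑ i, ∑ j, B i j ^ 2 - B.trace ^ 2 / Fintype.card n := by
        simp only [sq]; ring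

theorem sum_sum_traceFreePart_vecMulVec_sq (v : n → ℝ) :
    ∑ i, ∑ j, (vecMulVec v v).traceFreePart i j ^ 2
      = (1 - (Fintype.card n : ℝ)⁻¹) * (v ⬝ᵥ v) ^ 2 := by
  rw [sum_sum_traceFreePart_sq, sum_sum_vecMulVec_sq, trace_vecMulVec]
  ring

theorem dotProduct_mulVec_le_of_trace_eq_zero {A : Matrix n n ℝ} (hA : A.trace = 0)
    (v : n → ℝ) :
    A *ᵥ v ⬝ᵥ v
      ≤ √(1 - (Fintype.card n : ℝ)⁻¹) * √(∑ i, ∑ j, A i j ^ 2) * (v ⬝ᵥ v) :=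
  calc A *ᵥ v ⬝ᵥ v = ∑ i, ∑ j, A i j * (vecMulVec v v).traceFreePart i j := by
        rw [sum_sum_mul_traceFreePart hA, sum_sum_mul_vecMulVec]
    _ ≤ √(∑ i, ∑ j, A i j ^ 2) * √(∑ i, ∑ j, (vecMulVec v v).traceFreePart i j ^ 2) :=
        Real.sum_sum_mul_le_sqrt_mul_sqrt _ _
    _ = √(1 - (Fintype.card n : ℝ)⁻¹) * √(∑ i, ∑ j, A i j ^ 2) * (v ⬝ᵥ v) := by
        rw [sum_sum_traceFreePart_vecMulVec_sq, Real.sqrt_mul' _ (sq_nonneg _),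
          Real.sqrt_sq (dotProduct_self_nonneg v)]
        ring

theorem dotProduct_mulVec_traceFreePart_vecMulVec (v : n → ℝ) :
    (vecMulVec v v).traceFreePart *ᵥ v ⬝ᵥ v
      = √(1 - (Fintype.card n : ℝ)⁻¹)
          * √(∑ i, ∑ j, (vecMulVec v v).traceFreePart i j ^ 2) * (v ⬝ᵥ v) := by
  have hc : 0 ≤ 1 - (Fintype.card n : ℝ)⁻¹ := by
    rcases (Fintype.card n).eq_zero_or_pos with h | h
    · simp [h]
    · simpa using inv_le_one_of_one_le₀ (Nat.one_le_cast.mpr h)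
  rw [← sum_sum_mul_vecMulVec, ← sum_sum_mul_traceFreePart (trace_traceFreePart _)]
  simp only [← sq]
  rw [sum_sum_traceFreePart_vecMulVec_sq, Real.sqrt_mul hc, Real.sqrt_sq
    (dotProduct_self_nonneg v), ← mul_assoc, Real.mul_self_sqrt hc]
  ring

theorem traceFreePart_vecMulVec_ne_zero (hn : 1 < Fintype.card n) {v : n → ℝ} (hv : v ≠ 0) :
    (vecMulVec v v).traceFreePart ≠ 0 := by
  intro h
  have hc : 0 < 1 - (Fintype.card n : ℝ)⁻¹ :=
    sub_pos.mpr (inv_lt_one_of_one_lt₀ (Nat.one_lt_cast.mpr hn))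
  have hs : v ⬝ᵥ v ≠ 0 := dotProduct_self_eq_zero.not.mpr hv
  refine mul_ne_zero hc.ne' (pow_ne_zero 2 hs) ?_
  rw [← sum_sum_traceFreePart_vecMulVec_sq, h]
  simp

end Matrix

theorem tracefree_symmetric_quadratic_form_bound_general
    (A : Matrix (Fin 3) (Fin 3) ℝ) (htr : A.trace = 0) :
    (∀ v : Fin 3 → ℝ,
        A.mulVec v ⬝ᵥ v
          ≤ Real.sqrt (2 / 3) * Real.sqrt (∑ i, ∑ j, A i j ^ 2) * (v ⬝ᵥ v)) ∧
    ∃ (B : Matrix (Fin 3) (Fin 3) ℝ) (w : Fin 3 → ℝ), B.IsSymm ∧ B.trace = 0 ∧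
      B ≠ 0 ∧ w ≠ 0 ∧
      B.mulVec w ⬝ᵥ w
        = Real.sqrt (2 / 3) * Real.sqrt (∑ i, ∑ j, B i j ^ 2) * (w ⬝ᵥ w) := by
  have hc : 1 - (Fintype.card (Fin 3) : ℝ)⁻¹ = 2 / 3 := by norm_num
  refine ⟨fun v => hc ▸ dotProduct_mulVec_le_of_trace_eq_zero htr v, ?_⟩
  have hw : (Pi.single 0 1 : Fin 3 → ℝ) ≠ 0 := Pi.single_ne_zero_iff.mpr one_ne_zero
  exact ⟨_, _, (isSymm_vecMulVec _).traceFreePart, trace_traceFreePart _,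
    traceFreePart_vecMulVec_ne_zero (by simp) hw, hw,
    hc ▸ dotProduct_mulVec_traceFreePart_vecMulVec _⟩

/-- For a trace-free symmetric real `3×3` matrix `A` with Frobenius norm `|A|`,
`⟨Av, v⟩ ≤ √(2/3)·|A|·|v|²` for every `v ∈ ℝ³`, and the bound is sharp. -/
theorem tracefree_symmetric_quadratic_form_bound
    (A : Matrix (Fin 3) (Fin 3) ℝ) (hA : A.IsSymm) (htr : A.trace = 0) :
    (∀ v : Fin 3 → ℝ,
        A.mulVec v ⬝ᵥ v
          ≤ Real.sqrt (2 / 3) * Real.sqrt (∑ i, ∑ j, A i j ^ 2) * (v ⬝ᵥ v)) ∧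
    ∃ (B : Matrix (Fin 3) (Fin 3) ℝ) (w : Fin 3 → ℝ), B.IsSymm ∧ B.trace = 0 ∧
      B ≠ 0 ∧ w ≠ 0 ∧
      B.mulVec w ⬝ᵥ w
        = Real.sqrt (2 / 3) * Real.sqrt (∑ i, ∑ j, B i j ^ 2) * (w ⬝ᵥ w) :=
  tracefree_symmetric_quadratic_form_bound_general A htr
end
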